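/- The 5-dimensional complex algebra μ⁵₁,₄ with nonzero products e₁e₁=e₂, e₁e₂=e₃, e₁e₃=e₄, e₁e₅=e₄, e₂e₁=e₃, e₂e₂=e₄, e₃e₁=e₄, e₅e₅=e₄ degenerates to μ⁵₁,₃ (same products but without e₅e₅=e₄) via the parametric basis E₁ᵗ = t e₁, E₂ᵗ = t² e₂, E₃ᵗ = t³ e₃, E₄ᵗ = t⁴ e₄, E₅ᵗ = t³ e₅. -/

import Mathlib

/-!
Rescaling the standard basis to `eᵢ ↦ t ^ wᵢ • eᵢ` multiplies the structure constant `c i j m`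
by `t ^ (wᵢ + wⱼ - wₘ)`. For the weights `w = (1, 2, 3, 4, 3)` every product `eᵢ eⱼ = eₘ` of
`μ⁵₁,₄` has `wₘ ≤ wᵢ + wⱼ`, with equality except for `e₅e₅ = e₄`, whose constant becomes `t²`.
So as `t → 0` the constants converge to those of the associated graded algebra, which is `μ⁵₁,₃`.
-/

open Module Filter Topology

/-- Structure constants of the algebra `μ⁵₁,₄` (basis `e₁,…,e₅`, 0-indexed):
`e₁e₁=e₂, e₁e₂=e₃, e₁e₃=e₄, e₁e₅=e₄, e₂e₁=e₃, e₂e₂=e₄, e₃e₁=e₄, e₅e₅=e₄`. -/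
noncomputable def cA : Fin 5 → Fin 5 → Fin 5 → ℂ := fun i j m =>
  if i = 0 ∧ j = 0 ∧ m = 1 then 1
  else if i = 0 ∧ j = 1 ∧ m = 2 then 1
  else if i = 0 ∧ j = 2 ∧ m = 3 then 1
  else if i = 0 ∧ j = 4 ∧ m = 3 then 1
  else if i = 1 ∧ j = 0 ∧ m = 2 then 1
  else if i = 1 ∧ j = 1 ∧ m = 3 then 1
  else if i = 2 ∧ j = 0 ∧ m = 3 then 1
  else if i = 4 ∧ j = 4 ∧ m = 3 then 1
  else 0

/-- Structure constants of the algebra `μ⁵₁,₃`: the same products, without `e₅e₅ = e₄`. -/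
noncomputable def cB : Fin 5 → Fin 5 → Fin 5 → ℂ := fun i j m =>
  if i = 0 ∧ j = 0 ∧ m = 1 then 1
  else if i = 0 ∧ j = 1 ∧ m = 2 then 1
  else if i = 0 ∧ j = 2 ∧ m = 3 then 1
  else if i = 0 ∧ j = 4 ∧ m = 3 then 1
  else if i = 1 ∧ j = 0 ∧ m = 2 then 1
  else if i = 1 ∧ j = 1 ∧ m = 3 then 1
  else if i = 2 ∧ j = 0 ∧ m = 3 then 1
  else 0

/-- The multiplication of `μ⁵₁,₄` on `ℂ⁵`. -/
noncomputable def mulA (x y : Fin 5 → ℂ) : Fin 5 → ℂ :=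
  fun m => ∑ i, ∑ j, x i * y j * cA i j m

/-- The parametric basis `E₁ᵗ = t e₁, E₂ᵗ = t² e₂, E₃ᵗ = t³ e₃, E₄ᵗ = t⁴ e₄, E₅ᵗ = t³ e₅`. -/
noncomputable def E (t : ℂ) : Fin 5 → (Fin 5 → ℂ) :=
  fun i => (![t, t ^ 2, t ^ 3, t ^ 4, t ^ 3] i) • (Pi.single i 1 : Fin 5 → ℂ)


variable {K ι : Type*}

section Filtration

variable [CommSemiring K]

def IsFiltered (w : ι → ℕ) (c : ι → ι → ι → K) : Prop :=
  ∀ i j m, c i j m ≠ 0 → w m ≤ w i + w j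

/-- The truncated subtraction is exact wherever `c i j m ≠ 0`, as soon as `IsFiltered w c`. -/
def rescaledConst (w : ι → ℕ) (c : ι → ι → ι → K) (t : K) (i j m : ι) : K :=
  t ^ (w i + w j - w m) * c i j m

def gradedConst (w : ι → ℕ) (c : ι → ι → ι → K) (i j m : ι) : K :=
  if w m = w i + w j then c i j m else 0

theorem gradedConst_eq_zero_pow_mul {w : ι → ℕ} {c : ι → ι → ι → K} (hc : IsFiltered w c)
    (i j m : ι) : gradedConst w c i j m = 0 ^ (w i + w j - w m) * c i j m := by
  by_cases h : c i j m = 0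
  · simp [gradedConst, h]
  have hle := hc i j m h
  by_cases hw : w m = w i + w j
  · simp [gradedConst, hw]
  · simp [gradedConst, hw, zero_pow (by omega : w i + w j - w m ≠ 0)]

theorem tendsto_rescaledConst [TopologicalSpace K] [ContinuousMul K] {w : ι → ℕ}
    {c : ι → ι → ι → K} (hc : IsFiltered w c) (i j m : ι) :
    Tendsto (fun t => rescaledConst w c t i j m) (𝓝 0) (𝓝 (gradedConst w c i j m)) := by
  rw [gradedConst_eq_zero_pow_mul hc]
  exact ((continuous_pow _).mul continuous_const).tendsto 0

end Filtration

section DiagonalBasis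

variable [DecidableEq ι]

def weightedFamily [Semiring K] (w : ι → ℕ) (t : K) : ι → ι → K :=
  fun i => t ^ w i • Pi.single i 1

theorem linearIndependent_weightedFamily [Ring K] (w : ι → ℕ) {t : K} (ht : IsUnit t) :
    LinearIndependent K (weightedFamily w t) :=
  (Pi.linearIndependent_single_one ι K).units_smul fun i => (ht.pow (w i)).unit

variable [CommSemiring K] [Fintype ι]

def structMul (c : ι → ι → ι → K) (x y : ι → K) : ι → K :=
  fun m => ∑ i, ∑ j, x i * y j * c i j m

theorem structMul_smul_single (c : ι → ι → ι → K) (a b : K) (i j : ι) :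
    structMul c (a • Pi.single i 1) (b • Pi.single j 1) = fun m => a * b * c i j m := by
  funext m
  simp [structMul, Pi.single_apply]

theorem structMul_weightedFamily {w : ι → ℕ} {c : ι → ι → ι → K} (hc : IsFiltered w c)
    (t : K) (i j : ι) :
    structMul c (weightedFamily w t i) (weightedFamily w t j) =
      ∑ m, rescaledConst w c t i j m • weightedFamily w t m := by
  funext m
  simp only [weightedFamily, structMul_smul_single, Finset.sum_apply, Pi.smul_apply,
    Pi.single_apply, smul_eq_mul, mul_ite, mul_one, mul_zero, Finset.sum_ite_eq,
    Finset.mem_univ, if_true, rescaledConst]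
  by_cases h : c i j m = 0
  · simp [h]
  · rw [← pow_add, mul_right_comm, ← pow_add, Nat.sub_add_cancel (hc i j m h)]

end DiagonalBasis

def mu514Weights : Fin 5 → ℕ := ![1, 2, 3, 4, 3]

theorem E_eq_weightedFamily (t : ℂ) : E t = weightedFamily mu514Weights t := by
  funext i
  fin_cases i <;> simp [E, weightedFamily, mu514Weights]

theorem isFiltered_cA : IsFiltered mu514Weights cA := by
  intro i j m h
  fin_cases i <;> fin_cases j <;> fin_cases m <;> simp_all [cA, mu514Weights]

theorem gradedConst_cA : gradedConst mu514Weights cA = cB := by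
  funext i j m
  fin_cases i <;> fin_cases j <;> fin_cases m <;> simp [gradedConst, cA, cB, mu514Weights]

/-- `μ⁵₁,₄` degenerates to `μ⁵₁,₃` via the parametric basis
`(t e₁, t² e₂, t³ e₃, t⁴ e₄, t³ e₅)`: for every `t ≠ 0` the family `Eᵗ` is a basis, and
the structure constants of `μ⁵₁,₄` in this basis converge, as `t → 0`, to those of
`μ⁵₁,₃`. -/
theorem mu514_degenerates_to_mu513 :
    ∃ c : ℂ → Fin 5 → Fin 5 → Fin 5 → ℂ,
      (∀ t : ℂ, t ≠ 0 → LinearIndependent ℂ (E t) ∧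
        ∀ i j : Fin 5, mulA (E t i) (E t j) = ∑ m, c t i j m • E t m) ∧
      (∀ i j m : Fin 5,
        Tendsto (fun t => c t i j m) (𝓝[≠] (0 : ℂ)) (𝓝 (cB i j m))) := by
  refine ⟨rescaledConst mu514Weights cA, fun t ht => ?_, fun i j m => ?_⟩
  · rw [E_eq_weightedFamily]
    exact ⟨linearIndependent_weightedFamily _ ht.isUnit, structMul_weightedFamily isFiltered_cA t⟩
  · rw [← gradedConst_cA]
    exact (tendsto_rescaledConst isFiltered_cA i j m).mono_left nhdsWithin_le_nhds
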